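/- arXiv:1602.09117 — 2 statements merged into one kernel-verified Lean document; each statement's English description precedes it below -/
import Mathlib

section
/- Fix y ∈ (−1, 1). For all real x > 0 and t > 0: the function x' ↦ F(x', y, t) has derivative −t·√(1 − y²)/(t² + x² − 2·t·x·y) at the point x' = x, and the function t' ↦ F(x, y, t') has derivative x·√(1 − y²)/(t² + x² − 2·t·x·y) at the point t' = t. -/
/-- `F(x, y, t) = arccos((x·y − t)/√(t² + x² − 2·t·x·y))`. -/
noncomputable def F (x y t : ℝ) : ℝ :=
  Real.arccos ((x * y - t) / Real.sqrt (t ^ 2 + x ^ 2 - 2 * t * x * y))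

/-!
With `s = √(1 - y²)` we have `t² + x² - 2txy = (xy - t)² + (xs)²`, so `F(x, y, t)` is the
argument of the point `(xy - t, xs)` of the upper half-plane, i.e. `π/2 - arctan((xy - t)/(xs))`.
Both partial derivatives then follow from the quotient rule for `a/b` and `arctan' = 1/(1 + u²)`,
which together give `(a b' - a' b)/(a² + b²)`.
-/

open Real Filter Topology

lemma Real.arccos_div_sqrt_sq_add_sq {a b : ℝ} (hb : 0 < b) :
    arccos (a / √(a ^ 2 + b ^ 2)) = π / 2 - arctan (a / b) := by
  have hsqrt : √(1 + (a / b) ^ 2) = √(a ^ 2 + b ^ 2) / b := by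
    rw [show 1 + (a / b) ^ 2 = (a ^ 2 + b ^ 2) / b ^ 2 by field_simp; ring,
      sqrt_div' _ (sq_nonneg b), sqrt_sq hb.le]
  have hr : 0 < √(a ^ 2 + b ^ 2) := sqrt_pos.mpr (by positivity)
  rw [arccos_eq_pi_div_two_sub_arcsin, arctan_eq_arcsin, hsqrt]
  congr 2
  field_simp

lemma HasDerivAt.arccos_div_sqrt_sq_add_sq {f g : ℝ → ℝ} {f' g' z : ℝ}
    (hf : HasDerivAt f f' z) (hg : HasDerivAt g g' z) (hgz : 0 < g z) :
    HasDerivAt (fun w => arccos (f w / √(f w ^ 2 + g w ^ 2)))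
      ((f z * g' - f' * g z) / (f z ^ 2 + g z ^ 2)) z := by
  have hpos : ∀ᶠ w in 𝓝 z, 0 < g w := hg.continuousAt.eventually (lt_mem_nhds hgz)
  have heq : (fun w => arccos (f w / √(f w ^ 2 + g w ^ 2))) =ᶠ[𝓝 z]
      fun w => π / 2 - Real.arctan (f w / g w) :=
    hpos.mono fun w hw => Real.arccos_div_sqrt_sq_add_sq hw
  refine (((hf.div hg hgz.ne').arctan).const_sub (π / 2)).congr_of_eventuallyEq heq
    |>.congr_deriv ?_
  rw [Pi.div_apply]
  field_simp
  ring

lemma F_eq_arccos_div_sqrt_sq_add_sq {y : ℝ} (hy : y ^ 2 ≤ 1) (x t : ℝ) :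
    F x y t = arccos ((x * y - t) / √((x * y - t) ^ 2 + (x * √(1 - y ^ 2)) ^ 2)) := by
  rw [F, mul_pow, sq_sqrt (by linarith)]
  ring_nf

theorem stmt_11_general (y : ℝ) (hy : y ∈ Set.Ioo (-1 : ℝ) 1) (x t : ℝ)
    (hx : 0 < x) :
    HasDerivAt (fun x' : ℝ => F x' y t)
      (-(t * Real.sqrt (1 - y ^ 2)) / (t ^ 2 + x ^ 2 - 2 * t * x * y)) x ∧
    HasDerivAt (fun t' : ℝ => F x y t')
      (x * Real.sqrt (1 - y ^ 2) / (t ^ 2 + x ^ 2 - 2 * t * x * y)) t := by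
  have hy2 : y ^ 2 < 1 := by nlinarith [hy.1, hy.2]
  set s := √(1 - y ^ 2)
  have hs : 0 < s := sqrt_pos.mpr (by linarith)
  have hsum : (x * y - t) ^ 2 + (x * s) ^ 2 = t ^ 2 + x ^ 2 - 2 * t * x * y := by
    rw [mul_pow, sq_sqrt (by linarith)]
    ring
  simp only [F_eq_arccos_div_sqrt_sq_add_sq hy2.le]
  constructor
  · refine HasDerivAt.arccos_div_sqrt_sq_add_sq (g := fun x' => x' * s)
      (((hasDerivAt_id' x).mul_const y).sub_const t) ((hasDerivAt_id' x).mul_const s)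
      (mul_pos hx hs) |>.congr_deriv ?_
    rw [hsum]
    ring
  · refine HasDerivAt.arccos_div_sqrt_sq_add_sq (g := fun _ => x * s)
      ((hasDerivAt_id' t).const_sub (x * y)) (hasDerivAt_const t (x * s))
      (mul_pos hx hs) |>.congr_deriv ?_
    rw [hsum]
    ring

/-- For `y ∈ (−1, 1)`, `x > 0`, `t > 0`: the partial derivative of `F` in its first
variable at `x` is `−t·√(1 − y²)/(t² + x² − 2·t·x·y)`, and the partial derivative in
its third variable at `t` is `x·√(1 − y²)/(t² + x² − 2·t·x·y)`. -/
theorem stmt_11 (y : ℝ) (hy : y ∈ Set.Ioo (-1 : ℝ) 1) (x t : ℝ)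
    (hx : 0 < x) (ht : 0 < t) :
    HasDerivAt (fun x' : ℝ => F x' y t)
      (-(t * Real.sqrt (1 - y ^ 2)) / (t ^ 2 + x ^ 2 - 2 * t * x * y)) x ∧
    HasDerivAt (fun t' : ℝ => F x y t')
      (x * Real.sqrt (1 - y ^ 2) / (t ^ 2 + x ^ 2 - 2 * t * x * y)) t :=
  stmt_11_general y hy x t hx
end

section
/- Let a > 1 be real. For every y ∈ (−1, 1), the function y' ↦ F(1, y', a) − F(1, y', a⁻¹) has derivative (a² − 1)/(√(1 − y²)·(a² + 1 − 2·a·y)) at the point y' = y; in particular this function is strictly increasing on (−1, 1). -/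
/-!
With `D(t) = t² + 1 − 2ty = (y − t)² + (1 − y²)`, the argument `(y − t)/√D(t)` of the arccos
in `F 1 y t` stays strictly inside `(−1, 1)`, and the chain rule gives
`∂_y F 1 y t = −(1 − t y)/(D(t) √(1 − y²))`. Since `D(a⁻¹) = D(a)/a²`, the two derivatives
combine into `(a² − 1)/(√(1 − y²) D(a))`, which is positive for `a > 1`.
-/

open Real Set

lemma one_sub_sq_pos_of_mem_Ioo {y : ℝ} (hy : y ∈ Ioo (-1 : ℝ) 1) : 0 < 1 - y ^ 2 := by
  nlinarith [hy.1, hy.2]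

lemma sub_sq_lt_sq_add_one_sub_two_mul {y : ℝ} (hy : y ∈ Ioo (-1 : ℝ) 1) (t : ℝ) :
    (y - t) ^ 2 < t ^ 2 + 1 - 2 * t * y := by
  nlinarith [hy.1, hy.2]

lemma sq_add_one_sub_two_mul_pos {y : ℝ} (hy : y ∈ Ioo (-1 : ℝ) 1) (t : ℝ) :
    0 < t ^ 2 + 1 - 2 * t * y :=
  (sq_nonneg _).trans_lt (sub_sq_lt_sq_add_one_sub_two_mul hy t)

lemma hasDerivAt_F_one {y : ℝ} (hy : y ∈ Ioo (-1 : ℝ) 1) (t : ℝ) :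
    HasDerivAt (fun y' ↦ F 1 y' t)
      (-((1 - t * y) / ((t ^ 2 + 1 - 2 * t * y) * √(1 - y ^ 2)))) y := by
  set D := t ^ 2 + 1 - 2 * t * y
  have hD : 0 < D := sq_add_one_sub_two_mul_pos hy t
  have hsD : 0 < √D := sqrt_pos.2 hD
  have hsq : √D ^ 2 = D := sq_sqrt hD.le
  have h1y := one_sub_sq_pos_of_mem_Ioo hy
  have hu : |(y - t) / √D| < 1 := by
    rw [← sq_lt_one_iff_abs_lt_one, div_pow, hsq, div_lt_one hD]
    exact sub_sq_lt_sq_add_one_sub_two_mul hy t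
  have hD' : HasDerivAt (fun y' ↦ t ^ 2 + 1 - 2 * t * y') (-(2 * t)) y := by
    simpa using ((hasDerivAt_id y).const_mul (2 * t)).const_sub (t ^ 2 + 1)
  have harg : HasDerivAt (fun y' ↦ (y' - t) / √(t ^ 2 + 1 - 2 * t * y'))
      ((1 * √D - (y - t) * (1 / (2 * √D) * -(2 * t))) / √D ^ 2) y :=
    ((hasDerivAt_id y).sub_const t).div ((hasDerivAt_sqrt hD.ne').comp y hD') hsD.ne'
  have harc := (hasDerivAt_arccos (abs_lt.1 hu).1.ne' (abs_lt.1 hu).2.ne).comp y harg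
  simp only [F, one_mul, one_pow, mul_one]
  refine harc.congr_deriv ?_
  have h1u : 1 - ((y - t) / √D) ^ 2 = (1 - y ^ 2) / D := by
    rw [div_pow, hsq]; field_simp; ring
  rw [h1u, sqrt_div h1y.le]
  field_simp
  rw [hsq]
  ring

lemma hasDerivAt_F_one_sub_F_one_inv {a : ℝ} (ha : a ≠ 0) {y : ℝ} (hy : y ∈ Ioo (-1 : ℝ) 1) :
    HasDerivAt (fun y' ↦ F 1 y' a - F 1 y' a⁻¹)
      ((a ^ 2 - 1) / (√(1 - y ^ 2) * (a ^ 2 + 1 - 2 * a * y))) y := by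
  refine ((hasDerivAt_F_one hy a).sub (hasDerivAt_F_one hy a⁻¹)).congr_deriv ?_
  have hD := (sq_add_one_sub_two_mul_pos hy a).ne'
  have hs : √(1 - y ^ 2) ≠ 0 := (sqrt_pos.2 (one_sub_sq_pos_of_mem_Ioo hy)).ne'
  have hDinv : a⁻¹ ^ 2 + 1 - 2 * a⁻¹ * y = (a ^ 2 + 1 - 2 * a * y) / a ^ 2 := by
    field_simp; ring
  rw [hDinv]
  field_simp
  ring

/-- Let `a > 1`.  For every `y ∈ (−1, 1)`, the function
`y' ↦ F(1, y', a) − F(1, y', a⁻¹)` has derivative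
`(a² − 1)/(√(1 − y²)·(a² + 1 − 2·a·y))` at `y`; in particular it is strictly
increasing on `(−1, 1)`. -/
theorem stmt_12 (a : ℝ) (ha : 1 < a) :
    (∀ y ∈ Set.Ioo (-1 : ℝ) 1,
      HasDerivAt (fun y' : ℝ => F 1 y' a - F 1 y' a⁻¹)
        ((a ^ 2 - 1) / (Real.sqrt (1 - y ^ 2) * (a ^ 2 + 1 - 2 * a * y))) y) ∧
    StrictMonoOn (fun y : ℝ => F 1 y a - F 1 y a⁻¹) (Set.Ioo (-1 : ℝ) 1) := by
  have hderiv := fun y (hy : y ∈ Ioo (-1 : ℝ) 1) ↦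
    hasDerivAt_F_one_sub_F_one_inv (by positivity : a ≠ 0) hy
  refine ⟨hderiv, strictMonoOn_of_deriv_pos (convex_Ioo _ _)
    (fun y hy ↦ (hderiv y hy).continuousAt.continuousWithinAt) fun y hy ↦ ?_⟩
  rw [interior_Ioo] at hy
  rw [(hderiv y hy).deriv]
  have hD := sq_add_one_sub_two_mul_pos hy a
  have hs : 0 < √(1 - y ^ 2) := sqrt_pos.2 (one_sub_sq_pos_of_mem_Ioo hy)
  have ha2 : 0 < a ^ 2 - 1 := by nlinarith
  positivity
end
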